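/- For every α ∈ (0,1) and every integer k ≥ 0, one has |g̃_k(z) − sect_p(z)| ≤ (1 − α_k)/(1 + α_k) for every z ∈ S_{p,α}. -/

import Mathlib

/-- `mu p t = ((t - t^p)/((p-1)(1-t)))^(1/p)`, the real positive `p`th root. -/
noncomputable def mu (p : ℕ) (t : ℝ) : ℝ :=
  ((t - t ^ p) / (((p : ℝ) - 1) * (1 - t))) ^ ((1 : ℝ) / p)

/-- The sequence `α_0 = α`, `α_{k+1} = p α_k / ((p-1) μ(α_k) + μ(α_k)^(1-p) α_k^p)`. -/
noncomputable def alphaSeq (p : ℕ) (α : ℝ) : ℕ → ℝ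
  | 0 => α
  | k + 1 =>
      (p : ℝ) * alphaSeq p α k /
        (((p : ℝ) - 1) * mu p (alphaSeq p α k) +
          alphaSeq p α k ^ p / mu p (alphaSeq p α k) ^ (p - 1))

/-- `f_0(x) = 1`, `f_{k+1}(x) = (1/p)((p-1) μ(α_k) f_k(x) + x/(μ(α_k)^(p-1) f_k(x)^(p-1)))`. -/
noncomputable def fSeq (p : ℕ) (α : ℝ) : ℕ → ℝ → ℝ
  | 0, _ => 1
  | k + 1, x =>
      (1 / (p : ℝ)) *
        (((p : ℝ) - 1) * mu p (alphaSeq p α k) * fSeq p α k x +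
          x / (mu p (alphaSeq p α k) ^ (p - 1) * fSeq p α k x ^ (p - 1)))

/-- The scaled iterate `f̃_k(x) = (2 α_k/(1+α_k)) f_k(x)`. -/
noncomputable def ftilde (p : ℕ) (α : ℝ) (k : ℕ) (x : ℝ) : ℝ :=
  (2 * alphaSeq p α k / (1 + alphaSeq p α k)) * fSeq p α k x

/-- Complex version of the iteration `f_k`, defined by the same rational expressions. -/
noncomputable def fSeqC (p : ℕ) (α : ℝ) : ℕ → ℂ → ℂ
  | 0, _ => 1
  | k + 1, z =>
      (1 / (p : ℂ)) *
        (((p : ℂ) - 1) * (mu p (alphaSeq p α k) : ℂ) * fSeqC p α k z +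
          z / ((mu p (alphaSeq p α k) : ℂ) ^ (p - 1) * fSeqC p α k z ^ (p - 1)))

/-- `g_k(z) = z / f_k(z^p)`. -/
noncomputable def gC (p : ℕ) (α : ℝ) (k : ℕ) (z : ℂ) : ℂ := z / fSeqC p α k (z ^ p)

/-- `g̃_k(z) = (2/(1+α_k)) g_k(z)`. -/
noncomputable def gtC (p : ℕ) (α : ℝ) (k : ℕ) (z : ℂ) : ℂ :=
  (2 / (1 + (alphaSeq p α k : ℂ))) * gC p α k z

lemma sum_aux (n : ℕ) (a x F : ℝ) (ha : 0 ≤ a) (hx : 0 ≤ x) (hxF : x ≤ F) :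
    x * ∑ i ∈ Finset.range n, x^i * (a*F)^(n-1-i) ≤ (∑ i ∈ Finset.range n, a^i) * F^n := by
  rw [Finset.mul_sum, Finset.sum_mul, ← Finset.sum_range_reflect (fun i => a^i * F^n) n]
  apply Finset.sum_le_sum
  intro i hi
  simp only [Finset.mem_range] at hi
  have hF0 : 0 ≤ F := hx.trans hxF
  have h1 : x^(i+1) ≤ F^(i+1) := pow_le_pow_left₀ hx hxF _
  have h2 : F^(i+1) * F^(n-1-i) = F^n := by rw [← pow_add]; congr 1; omega
  calc x * (x^i * (a*F)^(n-1-i)) = x^(i+1) * (a^(n-1-i) * F^(n-1-i)) := by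
        rw [mul_pow, pow_succ]; ring
    _ ≤ F^(i+1) * (a^(n-1-i) * F^(n-1-i)) :=
        mul_le_mul_of_nonneg_right h1 (by positivity)
    _ = a^(n-1-i) * F^n := by rw [← h2]; ring

lemma pow_sub_pow_ge (n : ℕ) (s t : ℝ) (hs : 0 ≤ s) (ht : 0 ≤ t) :
    (n:ℝ) * s^(n-1) * (t - s) ≤ t^n - s^n := by
  rw [← geom_sum₂_mul t s n]
  rcases le_total s t with h | h
  · apply mul_le_mul_of_nonneg_right _ (by linarith)
    calc (n:ℝ)*s^(n-1) = ∑ _i ∈ Finset.range n, s^(n-1) := by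
          rw [Finset.sum_const, Finset.card_range, nsmul_eq_mul]
      _ ≤ ∑ i ∈ Finset.range n, t^i*s^(n-1-i) := by
          apply Finset.sum_le_sum
          intro i hi
          simp only [Finset.mem_range] at hi
          have he : s^(n-1) = s^i * s^(n-1-i) := by rw [← pow_add]; congr 1; omega
          rw [he]
          exact mul_le_mul_of_nonneg_right (pow_le_pow_left₀ hs h i) (pow_nonneg hs _)
  · apply mul_le_mul_of_nonpos_right _ (by linarith)
    calc (∑ i ∈ Finset.range n, t^i*s^(n-1-i)) ≤ ∑ _i ∈ Finset.range n, s^(n-1) := by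
          apply Finset.sum_le_sum
          intro i hi
          simp only [Finset.mem_range] at hi
          have he : s^(n-1) = s^i * s^(n-1-i) := by rw [← pow_add]; congr 1; omega
          rw [he]
          exact mul_le_mul_of_nonneg_right (pow_le_pow_left₀ ht h i) (pow_nonneg hs _)
      _ = (n:ℝ)*s^(n-1) := by rw [Finset.sum_const, Finset.card_range, nsmul_eq_mul]

lemma pow_sub_pow_gt (n : ℕ) (hn : 2 ≤ n) (s t : ℝ) (hs : 0 < s) (ht : 0 ≤ t) (hts : t < s) :
    (n:ℝ) * s^(n-1) * (t - s) < t^n - s^n := by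
  rw [← geom_sum₂_mul t s n]
  have hSlt : (∑ i ∈ Finset.range n, t^i*s^(n-1-i)) < (n:ℝ)*s^(n-1) := by
    have : (n:ℝ)*s^(n-1) = ∑ _i ∈ Finset.range n, s^(n-1) := by
      rw [Finset.sum_const, Finset.card_range, nsmul_eq_mul]
    rw [this]
    apply Finset.sum_lt_sum
    · intro i hi
      simp only [Finset.mem_range] at hi
      have he : s^(n-1) = s^i * s^(n-1-i) := by rw [← pow_add]; congr 1; omega
      rw [he]
      exact mul_le_mul_of_nonneg_right (pow_le_pow_left₀ ht hts.le i) (pow_nonneg hs.le _)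
    · refine ⟨n-1, Finset.mem_range.2 (by omega), ?_⟩
      have h00 : n - 1 - (n-1) = 0 := by omega
      rw [h00, pow_zero, mul_one]
      exact pow_lt_pow_left₀ hts ht (by omega)
  exact mul_lt_mul_of_neg_right hSlt (by linarith)

lemma mu_base_pos {p : ℕ} {a : ℝ} (hp : 2 ≤ p) (ha : a ∈ Set.Ioo (0:ℝ) 1) :
    0 < (a - a ^ p) / (((p : ℝ) - 1) * (1 - a)) := by
  obtain ⟨h0, h1⟩ := ha
  have hap : a^p < a := by
    calc a^p < a^1 := pow_lt_pow_right_of_lt_one₀ h0 h1 (by omega)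
    _ = a := pow_one a
  have hp1 : (0:ℝ) < (p:ℝ) - 1 := by
    have : (2:ℝ) ≤ (p:ℝ) := by exact_mod_cast hp
    linarith
  apply div_pos (by linarith) (by nlinarith)

lemma mu_pos {p : ℕ} {a : ℝ} (hp : 2 ≤ p) (ha : a ∈ Set.Ioo (0:ℝ) 1) : 0 < mu p a :=
  Real.rpow_pos_of_pos (mu_base_pos hp ha) _

lemma mu_pow {p : ℕ} {a : ℝ} (hp : 2 ≤ p) (ha : a ∈ Set.Ioo (0:ℝ) 1) :
    (mu p a)^p = (a - a ^ p) / (((p : ℝ) - 1) * (1 - a)) := by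
  have hb := mu_base_pos hp ha
  rw [mu, ← Real.rpow_natCast (_ ^ ((1:ℝ)/p)) p, ← Real.rpow_mul hb.le, one_div,
    inv_mul_cancel₀ (by exact_mod_cast (by omega : p ≠ 0) : (p:ℝ) ≠ 0), Real.rpow_one]

lemma mu_pow_eq {p : ℕ} {a : ℝ} (hp : 2 ≤ p) (ha : a ∈ Set.Ioo (0:ℝ) 1) :
    ((p:ℝ) - 1) * (mu p a)^p = a * ∑ i ∈ Finset.range (p-1), a^i := by
  obtain ⟨h0, h1⟩ := id ha
  have hp1 : (0:ℝ) < (p:ℝ) - 1 := by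
    have : (2:ℝ) ≤ (p:ℝ) := by exact_mod_cast hp
    linarith
  have h1a : (1:ℝ) - a ≠ 0 := by linarith
  have hgs : (∑ i ∈ Finset.range (p-1), a^i) * (a - 1) = a^(p-1) - 1 := geom_sum_mul a (p-1)
  have hpp : a^(p-1) * a = a^p := by rw [← pow_succ]; congr 1; omega
  rw [mu_pow hp ha, mul_div_assoc', div_eq_iff (by positivity)]
  linear_combination ((p:ℝ)-1)*a*hgs + ((p:ℝ)-1)*hpp

lemma core_ineq (p : ℕ) (hp : 2 ≤ p) (a x F : ℝ) (ha0 : 0 < a) (hx : 0 < x)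
    (h1 : a*F ≤ x) (h2 : x ≤ F) :
    a * (∑ i ∈ Finset.range (p-1), a^i) * F^p + x^p ≤
      x * (∑ i ∈ Finset.range (p-1), a^i) * F^(p-1) + a^(p-1) * x * F^(p-1) := by
  set n := p - 1 with hn
  set S := ∑ i ∈ Finset.range n, a^i with hS
  set T := ∑ i ∈ Finset.range n, x^i * (a*F)^(n-1-i) with hT
  have hgeo : T * (x - a*F) = x^n - (a*F)^n := geom_sum₂_mul x (a*F) n
  have hsum : x * T ≤ S * F^n := sum_aux n a x F ha0.le hx.le h2
  have h3 : 0 ≤ x - a*F := by linarith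
  have h5 : (x - a*F) * (x*T - S*F^n) ≤ 0 :=
    mul_nonpos_of_nonneg_of_nonpos h3 (by linarith)
  have hxp : x^p = x^n * x := by rw [← pow_succ]; congr 1; omega
  have hFp : F^p = F^n * F := by rw [← pow_succ]; congr 1; omega
  rw [hxp, hFp]
  have hmp : (a*F)^n = a^n * F^n := mul_pow a F n
  nlinarith [h5, hgeo, hmp]

lemma main_real (p : ℕ) (hp : 2 ≤ p) (α : ℝ) (hα : α ∈ Set.Ioo (0:ℝ) 1) (k : ℕ) :
    alphaSeq p α k ∈ Set.Ioo (0:ℝ) 1 ∧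
    ∀ x ∈ Set.Icc α 1, alphaSeq p α k * fSeq p α k (x^p) ≤ x ∧ x ≤ fSeq p α k (x^p) := by
  have hp1 : (0:ℝ) < (p:ℝ) - 1 := by
    have : (2:ℝ) ≤ (p:ℝ) := by exact_mod_cast hp
    linarith
  have hpR : (0:ℝ) < (p:ℝ) := by linarith
  induction k with
  | zero =>
    refine ⟨hα, fun x hx => ?_⟩
    simp only [alphaSeq, fSeq]
    exact ⟨by simpa using hx.1, by simpa using hx.2⟩
  | succ k ih =>
    obtain ⟨ha, hb⟩ := ih
    set a := alphaSeq p α k with hadef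
    obtain ⟨ha0, ha1⟩ := id ha
    set m := mu p a with hmdef
    have hm : 0 < m := mu_pos hp ha
    have hmp : ((p:ℝ) - 1) * m^p = a * ∑ i ∈ Finset.range (p-1), a^i := mu_pow_eq hp ha
    set S := ∑ i ∈ Finset.range (p-1), a^i with hSdef
    have hmm : m^(p-1) * m = m^p := by rw [← pow_succ]; congr 1; omega
    have hmpow : 0 < m^(p-1) := pow_pos hm _
    -- a < m
    have hSgt : ((p:ℝ)-1) * a^(p-1) < S := by
      have hc : ((p:ℝ)-1)*a^(p-1) = ∑ _i ∈ Finset.range (p-1), a^(p-1) := by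
        rw [Finset.sum_const, Finset.card_range, nsmul_eq_mul]
        congr 1
        push_cast [Nat.cast_sub (by omega : 1 ≤ p)]
        ring
      rw [hc]
      apply Finset.sum_lt_sum_of_nonempty
      · exact Finset.nonempty_range_iff.2 (by omega)
      · intro i hi
        simp only [Finset.mem_range] at hi
        exact pow_lt_pow_right_of_lt_one₀ ha0 ha1 (by omega)
    have hapmp : a^p < m^p := by
      have h1 : ((p:ℝ)-1) * a^p < ((p:ℝ)-1) * m^p := by
        rw [hmp]
        have hpa : a^p = a * a^(p-1) := by rw [← pow_succ']; congr 1; omega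
        rw [hpa]
        calc ((p:ℝ)-1) * (a * a^(p-1)) = a * (((p:ℝ)-1) * a^(p-1)) := by ring
          _ < a * S := by exact (mul_lt_mul_iff_right₀ ha0).2 hSgt
      exact lt_of_mul_lt_mul_left h1 hp1.le
    have ham : a < m := lt_of_pow_lt_pow_left₀ p hm.le hapmp
    -- strict AM-GM at (m, a)
    have hstrict : (p:ℝ) * (m^(p-1) * a) < ((p:ℝ)-1) * m^p + a^p := by
      have := pow_sub_pow_gt p hp m a hm ha0.le ham
      nlinarith [this, hmm]
    -- denominator
    set D := ((p:ℝ) - 1) * m + a ^ p / m ^ (p - 1) with hDdef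
    have hD : 0 < D := by
      apply add_pos_of_pos_of_nonneg (mul_pos hp1 hm)
      positivity
    have hD' : D * m^(p-1) = ((p:ℝ)-1)*m^p + a^p := by
      rw [hDdef]
      field_simp
      linear_combination ((p:ℝ)-1) * hmm
    have hA : alphaSeq p α (k+1) = (p:ℝ) * a / D := by
      rw [alphaSeq]
    have hAmem : alphaSeq p α (k+1) ∈ Set.Ioo (0:ℝ) 1 := by
      rw [hA]
      constructor
      · exact div_pos (mul_pos hpR ha0) hD
      · rw [div_lt_one hD]
        have h1 : (p:ℝ)*a*m^(p-1) < D*m^(p-1) := by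
          rw [hD']; nlinarith [hstrict]
        exact lt_of_mul_lt_mul_right h1 hmpow.le
    refine ⟨hAmem, fun x hx => ?_⟩
    obtain ⟨h1, h2⟩ := hb x hx
    set F := fSeq p α k (x^p) with hFdef
    have hx0 : 0 < x := lt_of_lt_of_le hα.1 hx.1
    have hF0 : 0 < F := lt_of_lt_of_le hx0 h2
    have hFpow : 0 < F^(p-1) := pow_pos hF0 _
    have hFF : F^(p-1) * F = F^p := by rw [← pow_succ]; congr 1; omega
    set G := fSeq p α (k+1) (x^p) with hGdef
    have hG : G = (1 / (p:ℝ)) * (((p:ℝ)-1) * m * F + x^p / (m^(p-1) * F^(p-1))) := by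
      rw [hGdef, fSeq]
    have hG' : G * ((p:ℝ) * (m^(p-1) * F^(p-1))) = ((p:ℝ)-1)*(m*F)^p + x^p := by
      rw [hG, mul_pow, ← hmm, ← hFF]
      field_simp
    have hBpow : (m*F)^(p-1) = m^(p-1)*F^(p-1) := mul_pow m F (p-1)
    have hBB : (m*F)^(p-1) * (m*F) = (m*F)^p := by rw [← pow_succ]; congr 1; omega
    constructor
    · -- alpha_{k+1} * G ≤ x
      rw [hA, div_mul_eq_mul_div, div_le_iff₀ hD]
      have hpos2 : 0 < m^(p-1) * F^(p-1) := mul_pos hmpow hFpow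
      rw [← mul_le_mul_iff_left₀ hpos2]
      have hlhs : (p:ℝ)*a*G*(m^(p-1)*F^(p-1)) = a * (((p:ℝ)-1)*(m*F)^p + x^p) := by
        rw [← hG']; ring
      have hrhs : x*D*(m^(p-1)*F^(p-1)) = x * (((p:ℝ)-1)*m^p + a^p) * F^(p-1) := by
        rw [← hD']; ring
      rw [hlhs, hrhs]
      have hcore := core_ineq p hp a x F ha0 hx0 h1 h2
      have hmF : (m*F)^p = m^p * F^p := mul_pow m F p
      have hpa : a^p = a * a^(p-1) := by rw [← pow_succ']; congr 1; omega
      have e1 : a*(((p:ℝ)-1)*(m*F)^p + x^p) = a*(a*S*F^p + x^p) := by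
        rw [hmF]; linear_combination a*F^p*hmp
      have e2 : x*(((p:ℝ)-1)*m^p + a^p)*F^(p-1) = x*(a*S)*F^(p-1) + a*(a^(p-1)*x*F^(p-1)) := by
        rw [hpa]; linear_combination x*F^(p-1)*hmp
      rw [e1, e2]
      have hmul := mul_le_mul_of_nonneg_left hcore ha0.le
      linarith [hmul]
    · -- x ≤ G
      have hamgm := pow_sub_pow_ge p (m*F) x (by positivity) hx0.le
      have hpos3 : 0 < (p:ℝ) * (m^(p-1) * F^(p-1)) := by positivity
      rw [← mul_le_mul_iff_left₀ hpos3, hG']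
      have e3 : x * ((p:ℝ)*(m^(p-1)*F^(p-1))) = (p:ℝ)*(m*F)^(p-1)*x := by
        rw [hBpow]; ring
      rw [e3]
      have hBBp : (p:ℝ)*((m*F)^(p-1)*(m*F)) = (p:ℝ)*(m*F)^p := by rw [hBB]
      linarith [hamgm, hBBp]

lemma fSeqC_real (p : ℕ) (α : ℝ) (k : ℕ) (x : ℝ) :
    fSeqC p α k (x : ℂ) = ((fSeq p α k x : ℝ) : ℂ) := by
  induction k with
  | zero => simp [fSeqC, fSeq]
  | succ n ih =>
    rw [fSeqC, fSeq, ih]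
    push_cast
    ring

/-- **Lemma 4, part 2.** For every `α ∈ (0,1)` and every `k ≥ 0`,
`|g̃_k(z) - sect_p(z)| ≤ (1-α_k)/(1+α_k)` for every `z ∈ S_{p,α}`, i.e.
`z = x e^(2πij/p)` with `x ∈ [α,1]`, `j ∈ {1,…,p}`, where `sect_p(z) = e^(2πij/p)`. -/
theorem sector_error_gtilde_away_from_origin (p : ℕ) (hp : 2 ≤ p)
    (α : ℝ) (hα : α ∈ Set.Ioo (0 : ℝ) 1) (k : ℕ) :
    ∀ x ∈ Set.Icc α 1, ∀ j ∈ Finset.Icc 1 p,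
      ‖gtC p α k ((x : ℂ) * Complex.exp (2 * (Real.pi : ℂ) * Complex.I * j / p)) -
          Complex.exp (2 * (Real.pi : ℂ) * Complex.I * j / p)‖ ≤
      (1 - alphaSeq p α k) / (1 + alphaSeq p α k) := by
  intro x hx j hj
  obtain ⟨ha, hbounds⟩ := main_real p hp α hα k
  obtain ⟨h1, h2⟩ := hbounds x hx
  set a := alphaSeq p α k with hadef
  set F := fSeq p α k (x^p) with hFdef
  have hx0 : 0 < x := lt_of_lt_of_le hα.1 hx.1
  have hF0 : 0 < F := lt_of_lt_of_le hx0 h2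
  have h1a : (0:ℝ) < 1 + a := by linarith [ha.1]
  have hpC : (p:ℂ) ≠ 0 := by
    exact_mod_cast Nat.cast_ne_zero.2 (by omega : p ≠ 0)
  set e : ℂ := Complex.exp (2 * (Real.pi : ℂ) * Complex.I * j / p) with hedef
  have he : e ^ p = 1 := by
    rw [hedef, ← Complex.exp_nat_mul]
    have harg : (p:ℂ) * (2 * (Real.pi : ℂ) * Complex.I * j / p) =
        ((j:ℤ):ℂ) * (2 * (Real.pi : ℂ) * Complex.I) := by
      push_cast
      field_simp
    rw [harg, Complex.exp_int_mul_two_pi_mul_I]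
  have habs : ‖e‖ = 1 := by
    have harg2 : 2 * (Real.pi : ℂ) * Complex.I * j / p =
        ((2 * Real.pi * j / p : ℝ) : ℂ) * Complex.I := by
      push_cast
      field_simp
    rw [hedef, harg2, Complex.norm_exp_ofReal_mul_I]
  have hzp : ((x:ℂ) * e) ^ p = ((x ^ p : ℝ) : ℂ) := by
    rw [mul_pow, he, mul_one]
    push_cast
    ring
  have hfC : fSeqC p α k (((x:ℂ) * e) ^ p) = ((F : ℝ) : ℂ) := by
    rw [hzp, fSeqC_real, hFdef]
  have hFne : ((F : ℝ) : ℂ) ≠ 0 := by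
    exact_mod_cast Complex.ofReal_ne_zero.2 hF0.ne'
  have h1ane : (1 + (a:ℂ)) ≠ 0 := by
    have : ((1 + a : ℝ) : ℂ) ≠ 0 := Complex.ofReal_ne_zero.2 h1a.ne'
    push_cast at this
    exact this
  have key : gtC p α k ((x:ℂ) * e) - e = e * (((2*x/((1+a)*F) - 1 : ℝ)) : ℂ) := by
    rw [gtC, gC, hfC, ← hadef]
    push_cast
    field_simp
  rw [key, norm_mul, habs, one_mul, Complex.norm_real, Real.norm_eq_abs]
  -- real inequality
  have hden : (0:ℝ) < (1+a)*F := mul_pos h1a hF0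
  have habs2 : |2*x - (1+a)*F| ≤ (1-a)*F := by
    rw [abs_le]
    constructor
    · nlinarith
    · nlinarith
  have heq : 2*x/((1+a)*F) - 1 = (2*x - (1+a)*F) / ((1+a)*F) := by
    field_simp
  rw [heq, abs_div, abs_of_pos hden, div_le_div_iff₀ hden h1a]
  calc |2*x - (1+a)*F| * (1+a) ≤ ((1-a)*F) * (1+a) :=
        mul_le_mul_of_nonneg_right habs2 h1a.le
    _ = (1-a) * ((1+a)*F) := by ring
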